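/- arXiv:1911.01473 — 2 statements merged into one kernel-verified Lean document; each statement's English description precedes it below -/
import Mathlib

section
/- If the block matrix [[Q, M],[Mᵀ, R]] is symmetric positive semidefinite and R is symmetric positive definite, and P is symmetric positive semidefinite, then P₊ := Riccati(P, A, B, Q, M, R) = Q + Aᵀ P A − (M + Aᵀ P B)(R + Bᵀ P B)⁻¹(M + Aᵀ P B)ᵀ is symmetric positive semidefinite. -/
open Matrix

namespace Matrix

variable {k l n 𝕜 : Type*} [Fintype k] [Fintype l] [Fintype n]

theorem PosSemidef.fromBlocks_conjTranspose_mul_mul [Ring 𝕜] [PartialOrder 𝕜] [StarRing 𝕜]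
    {P : Matrix n n 𝕜} (hP : P.PosSemidef) (A : Matrix n k 𝕜) (B : Matrix n l 𝕜) :
    (fromBlocks (Aᴴ * P * A) (Aᴴ * P * B) (Bᴴ * P * A) (Bᴴ * P * B)).PosSemidef := by
  have h := hP.mul_mul_conjTranspose_same (fromRows Aᴴ Bᴴ)
  rwa [conjTranspose_fromRows_eq_fromCols_conjTranspose, fromRows_mul, fromRows_mul,
    mul_fromCols, mul_fromCols, fromRows_fromCols_eq_fromBlocks, conjTranspose_conjTranspose,
    conjTranspose_conjTranspose] at h

variable [Field 𝕜] [PartialOrder 𝕜] [StarRing 𝕜] [DecidableEq l]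

noncomputable def riccati (P A : Matrix n n 𝕜) (B : Matrix n l 𝕜) (Q : Matrix n n 𝕜)
    (M : Matrix n l 𝕜) (R : Matrix l l 𝕜) : Matrix n n 𝕜 :=
  Q + Aᴴ * P * A - (M + Aᴴ * P * B) * (R + Bᴴ * P * B)⁻¹ * (M + Aᴴ * P * B)ᴴ

/-- `riccati P A B Q M R` is the Schur complement of the block `R + BᴴPB` in the positive
semidefinite matrix `[[Q, M], [Mᴴ, R]] + [Aᴴ; Bᴴ] P [A, B]`. -/
theorem PosSemidef.riccati [StarOrderedRing 𝕜] {P A Q : Matrix n n 𝕜} {B M : Matrix n l 𝕜}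
    {R : Matrix l l 𝕜} (hblock : (fromBlocks Q M Mᴴ R).PosSemidef) (hR : R.PosDef)
    (hP : P.PosSemidef) : (riccati P A B Q M R).PosSemidef := by
  have hD : (R + Bᴴ * P * B).PosDef := hR.add_posSemidef (hP.conjTranspose_mul_mul_same B)
  have := hD.isUnit.invertible
  have hsum := hblock.add (hP.fromBlocks_conjTranspose_mul_mul A B)
  have hcross : Mᴴ + Bᴴ * P * A = (M + Aᴴ * P * B)ᴴ := by
    rw [conjTranspose_add, conjTranspose_mul, conjTranspose_mul, conjTranspose_conjTranspose,
      hP.isHermitian.eq, Matrix.mul_assoc]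
  rw [fromBlocks_add, hcross] at hsum
  exact (PosDef.fromBlocks₂₂ _ _ hD).mp hsum

end Matrix

/-- The Riccati update preserves symmetric positive semidefiniteness. -/
theorem stmt2 {n m : ℕ}
    (A Q : Matrix (Fin n) (Fin n) ℝ)
    (B M : Matrix (Fin n) (Fin m) ℝ)
    (R : Matrix (Fin m) (Fin m) ℝ)
    (P : Matrix (Fin n) (Fin n) ℝ)
    (hblock : (Matrix.fromBlocks Q M Mᵀ R).PosSemidef)
    (hR : R.PosDef)
    (hP : P.PosSemidef) :
    (Q + Aᵀ * P * A
      - (M + Aᵀ * P * B) * (R + Bᵀ * P * B)⁻¹ * (M + Aᵀ * P * B)ᵀ).PosSemidef := by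
  rw [← conjTranspose_eq_transpose_of_trivial] at hblock
  simpa only [riccati, conjTranspose_eq_transpose_of_trivial] using hblock.riccati (A := A) hR hP
end

section
/- Finite-horizon stochastic completion of squares: let x_{t+1} = A x_t + B u_t + w_t, where w_t are independent zero-mean square-integrable vectors independent of (x_0, u_0,…,u_t, x_1,…,x_t). With P_t, L_t, Δ_t as in the deterministic completion of squares, E[∑_{t=0}^{T−1}(x_tᵀ Q_t x_t + u_tᵀ R_t u_t) + x_Tᵀ Q_T x_T] = E[x_0ᵀ P_0 x_0] + ∑_{t=0}^{T−1} E[(u_t + L_t x_t)ᵀ Δ_t (u_t + L_t x_t)] + ∑_{t=0}^{T−1} E[w_tᵀ P_{t+1} w_t]. -/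
/-!
Completing the square in the Riccati recursion gives, for every state `x` and control `u`,
`xᵀQx + uᵀRu + (Ax + Bu)ᵀP'(Ax + Bu) = xᵀPx + (u + Lx)ᵀΔ(u + Lx)`, where `P'` is the next
Riccati matrix. With noise, `(Ax + Bu + w)ᵀP'(Ax + Bu + w)` exceeds the noiseless value by
`wᵀP'w + 2 (Ax + Bu)ᵀP'w`, and the cross term has zero mean because `w` is centred and
independent of `Ax + Bu`. So each stage cost plus `E[x_{t+1}ᵀP_{t+1}x_{t+1}]` equals
`E[x_tᵀP_tx_t]` plus the two stage terms on the right-hand side, and these identities telescope.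
The recursion is well defined because `P_t ⪰ 0` propagates backwards from `P_T = Q_T`, which
makes every `Δ_t` positive definite.
-/

open Matrix Finset MeasureTheory ProbabilityTheory

section Riccati

variable {ι κ : Type*} [Fintype ι]

lemma Matrix.IsSymm.dotProduct_mulVec_comm {M : Matrix ι ι ℝ} (hM : M.IsSymm) (v w : ι → ℝ) :
    v ⬝ᵥ M *ᵥ w = w ⬝ᵥ M *ᵥ v := by
  rw [dotProduct_mulVec, dotProduct_comm, ← vecMul_transpose, hM.eq]

lemma Matrix.IsSymm.add_dotProduct_mulVec_add {M : Matrix ι ι ℝ} (hM : M.IsSymm)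
    (v w : ι → ℝ) :
    (v + w) ⬝ᵥ M *ᵥ (v + w) = v ⬝ᵥ M *ᵥ v + 2 * (v ⬝ᵥ M *ᵥ w) + w ⬝ᵥ M *ᵥ w := by
  rw [mulVec_add, add_dotProduct, dotProduct_add, dotProduct_add, hM.dotProduct_mulVec_comm w v]
  ring

lemma isSymm_add_transpose_mul_mul {R : Matrix κ κ ℝ} {P : Matrix ι ι ℝ} (hR : R.IsSymm)
    (hP : P.IsSymm) (B : Matrix ι κ ℝ) : (R + Bᵀ * P * B).IsSymm :=
  hR.add <| by simp [IsSymm, transpose_mul, hP.eq, Matrix.mul_assoc]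

variable [Fintype κ]

lemma dotProduct_transpose_mulVec' (M : Matrix κ ι ℝ) (v : ι → ℝ) (w : κ → ℝ) :
    v ⬝ᵥ Mᵀ *ᵥ w = (M *ᵥ v) ⬝ᵥ w := by
  rw [dotProduct_mulVec, vecMul_transpose]

lemma isUnit_det_add_transpose_mul_mul [DecidableEq κ] {R : Matrix κ κ ℝ} {P : Matrix ι ι ℝ}
    (hR : R.PosDef) (hP : P.PosSemidef) (B : Matrix ι κ ℝ) : IsUnit (R + Bᵀ * P * B).det :=
  (hR.add_posSemidef (by simpa using hP.conjTranspose_mul_mul_same B)).det_pos.ne'.isUnit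

noncomputable section

variable [DecidableEq κ] (A : Matrix ι ι ℝ) (B : Matrix ι κ ℝ) (Q : Matrix ι ι ℝ)
  (R : Matrix κ κ ℝ) (P : Matrix ι ι ℝ)

def riccatiGain : Matrix κ ι ℝ := (R + Bᵀ * P * B)⁻¹ * Bᵀ * P * A

def riccatiMap : Matrix ι ι ℝ :=
  Q + Aᵀ * P * A - Aᵀ * P * B * (R + Bᵀ * P * B)⁻¹ * Bᵀ * P * A

variable {A B Q R P}

lemma mul_riccatiGain (hΔ : IsUnit (R + Bᵀ * P * B).det) :
    (R + Bᵀ * P * B) * riccatiGain A B R P = Bᵀ * P * A := by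
  calc (R + Bᵀ * P * B) * ((R + Bᵀ * P * B)⁻¹ * Bᵀ * P * A)
      = ((R + Bᵀ * P * B) * (R + Bᵀ * P * B)⁻¹) * (Bᵀ * P * A) := by
        simp only [Matrix.mul_assoc]
    _ = Bᵀ * P * A := by rw [mul_nonsing_inv _ hΔ, Matrix.one_mul]

lemma transpose_riccatiGain (hR : R.IsSymm) (hP : P.IsSymm) :
    (riccatiGain A B R P)ᵀ = Aᵀ * P * B * (R + Bᵀ * P * B)⁻¹ := by
  rw [riccatiGain, transpose_mul, transpose_mul, transpose_mul, transpose_nonsing_inv,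
    (isSymm_add_transpose_mul_mul hR hP B).eq, hP.eq, transpose_transpose]
  simp only [Matrix.mul_assoc]

lemma riccatiMap_eq (hR : R.IsSymm) (hP : P.IsSymm) (hΔ : IsUnit (R + Bᵀ * P * B).det) :
    riccatiMap A B Q R P = Q + Aᵀ * P * A
      - (riccatiGain A B R P)ᵀ * ((R + Bᵀ * P * B) * riccatiGain A B R P) := by
  rw [mul_riccatiGain hΔ, transpose_riccatiGain hR hP, riccatiMap]
  simp only [Matrix.mul_assoc]

lemma riccatiMap_eq_add (hR : R.IsSymm) (hP : P.IsSymm) (hΔ : IsUnit (R + Bᵀ * P * B).det) :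
    riccatiMap A B Q R P = Q + (A - B * riccatiGain A B R P)ᵀ * P * (A - B * riccatiGain A B R P)
      + (riccatiGain A B R P)ᵀ * R * riccatiGain A B R P := by
  set L := riccatiGain A B R P
  have hBPA : Bᵀ * P * A = (R + Bᵀ * P * B) * L := (mul_riccatiGain (A := A) hΔ).symm
  have hAPB : Aᵀ * P * B = Lᵀ * (R + Bᵀ * P * B) := by
    rw [← (isSymm_add_transpose_mul_mul hR hP B).eq, ← transpose_mul, ← hBPA]
    simp [transpose_mul, hP.eq, Matrix.mul_assoc]
  have hexp : (A - B * L)ᵀ * P * (A - B * L) = Aᵀ * P * A - (Aᵀ * P * B) * L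
      - Lᵀ * (Bᵀ * P * A) + Lᵀ * (Bᵀ * P * B) * L := by
    simp only [transpose_sub, transpose_mul, Matrix.sub_mul, Matrix.mul_sub, Matrix.mul_assoc]
    abel
  rw [riccatiMap_eq hR hP hΔ, hexp, hAPB, hBPA]
  simp only [Matrix.mul_add, Matrix.add_mul, Matrix.mul_assoc]
  abel

lemma posSemidef_riccatiMap (hQ : Q.PosSemidef) (hR : R.PosDef) (hP : P.PosSemidef) :
    (riccatiMap A B Q R P).PosSemidef := by
  rw [riccatiMap_eq_add (isHermitian_iff_isSymm.mp hR.isHermitian)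
    (isHermitian_iff_isSymm.mp hP.isHermitian) (isUnit_det_add_transpose_mul_mul hR hP B)]
  refine (hQ.add ?_).add ?_
  · simpa using hP.conjTranspose_mul_mul_same (A - B * riccatiGain A B R P)
  · simpa using hR.posSemidef.conjTranspose_mul_mul_same (riccatiGain A B R P)

lemma completion_of_squares (hR : R.IsSymm) (hP : P.IsSymm) (hΔ : IsUnit (R + Bᵀ * P * B).det)
    (x : ι → ℝ) (u : κ → ℝ) :
    x ⬝ᵥ Q *ᵥ x + u ⬝ᵥ R *ᵥ u + (A *ᵥ x + B *ᵥ u) ⬝ᵥ P *ᵥ (A *ᵥ x + B *ᵥ u)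
      = x ⬝ᵥ riccatiMap A B Q R P *ᵥ x
        + (u + riccatiGain A B R P *ᵥ x) ⬝ᵥ (R + Bᵀ * P * B) *ᵥ (u + riccatiGain A B R P *ᵥ x) := by
  have hx := congrArg (x ⬝ᵥ · *ᵥ x) (riccatiMap_eq (A := A) (Q := Q) hR hP hΔ)
  have hcross := congrArg (fun M => u ⬝ᵥ M *ᵥ x) (mul_riccatiGain (A := A) hΔ)
  simp only [sub_mulVec, add_mulVec, dotProduct_sub, dotProduct_add, ← mulVec_mulVec,
    dotProduct_transpose_mulVec'] at hx hcross
  have hsymm := (isSymm_add_transpose_mul_mul hR hP B).dotProduct_mulVec_comm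
    (riccatiGain A B R P *ᵥ x) u
  simp only [add_mulVec, dotProduct_add, ← mulVec_mulVec, dotProduct_transpose_mulVec'] at hsymm
  simp only [hx, mulVec_add, add_mulVec, add_dotProduct, dotProduct_add, ← mulVec_mulVec,
    dotProduct_transpose_mulVec', hP.dotProduct_mulVec_comm (A *ᵥ x) (B *ᵥ u)]
  linarith

end

end Riccati

section Expectation

variable {Ω ι κ : Type*} [Fintype ι] [Fintype κ] [MeasurableSpace Ω] {μ : Measure Ω}

lemma MeasureTheory.MemLp.mulVec {p : ENNReal} {g : Ω → κ → ℝ} (hg : MemLp g p μ)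
    (M : Matrix ι κ ℝ) : MemLp (fun ω => M *ᵥ g ω) p μ :=
  (LinearMap.toContinuousLinearMap M.mulVecLin).comp_memLp' hg

lemma integrable_dotProduct_mulVec (M : Matrix ι κ ℝ) {f : Ω → ι → ℝ} {g : Ω → κ → ℝ}
    (hf : MemLp f 2 μ) (hg : MemLp g 2 μ) : Integrable (fun ω => f ω ⬝ᵥ M *ᵥ g ω) μ :=
  integrable_finsetSum _ fun i _ => (hf.eval i).integrable_mul ((hg.mulVec M).eval i)

lemma ProbabilityTheory.IndepFun.integral_dotProduct {z w : Ω → ι → ℝ} (hzw : IndepFun z w μ)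
    (hz : Integrable z μ) (hw : Integrable w μ) :
    ∫ ω, z ω ⬝ᵥ w ω ∂μ = (∫ ω, z ω ∂μ) ⬝ᵥ ∫ ω, w ω ∂μ := by
  have hzw' (i : ι) : IndepFun (fun ω => z ω i) (fun ω => w ω i) μ :=
    hzw.comp (measurable_pi_apply i) (measurable_pi_apply i)
  simp only [dotProduct]
  rw [integral_finsetSum (f := fun i ω => z ω i * w ω i) _
    fun i _ => (hzw' i).integrable_mul (hz.eval i) (hw.eval i)]
  refine Finset.sum_congr rfl fun i _ => ?_
  rw [(hzw' i).integral_fun_mul_eq_mul_integral (hz.eval i).aestronglyMeasurable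
    (hw.eval i).aestronglyMeasurable, eval_integral hz.eval, eval_integral hw.eval]

variable [DecidableEq κ] [IsFiniteMeasure μ] {A : Matrix ι ι ℝ} {B : Matrix ι κ ℝ}
  {Q P : Matrix ι ι ℝ} {R : Matrix κ κ ℝ}

lemma integral_cost_add_integral_value (hR : R.IsSymm) (hP : P.IsSymm)
    (hΔ : IsUnit (R + Bᵀ * P * B).det) {x w : Ω → ι → ℝ} {u : Ω → κ → ℝ}
    (hx : MemLp x 2 μ) (hu : MemLp u 2 μ) (hw : MemLp w 2 μ)
    (hind : IndepFun (fun ω => A *ᵥ x ω + B *ᵥ u ω) w μ) (hw0 : ∫ ω, w ω ∂μ = 0) :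
    ∫ ω, (x ω ⬝ᵥ Q *ᵥ x ω + u ω ⬝ᵥ R *ᵥ u ω) ∂μ
        + ∫ ω, (A *ᵥ x ω + B *ᵥ u ω + w ω) ⬝ᵥ P *ᵥ (A *ᵥ x ω + B *ᵥ u ω + w ω) ∂μ
      = ∫ ω, x ω ⬝ᵥ riccatiMap A B Q R P *ᵥ x ω ∂μ
        + ∫ ω, (u ω + riccatiGain A B R P *ᵥ x ω) ⬝ᵥ (R + Bᵀ * P * B) *ᵥ
            (u ω + riccatiGain A B R P *ᵥ x ω) ∂μ
        + ∫ ω, w ω ⬝ᵥ P *ᵥ w ω ∂μ := by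
  have hy : MemLp (fun ω => A *ᵥ x ω + B *ᵥ u ω) 2 μ := (hx.mulVec A).add (hu.mulVec B)
  have hcross : ∫ ω, (A *ᵥ x ω + B *ᵥ u ω) ⬝ᵥ P *ᵥ w ω ∂μ = 0 := by
    have hind' : IndepFun (fun ω => Pᵀ *ᵥ (A *ᵥ x ω + B *ᵥ u ω)) w μ :=
      hind.comp (Continuous.matrix_mulVec continuous_const continuous_id).measurable measurable_id
    simp_rw [dotProduct_mulVec, ← mulVec_transpose]
    rw [hind'.integral_dotProduct ((hy.mulVec Pᵀ).integrable one_le_two)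
      (hw.integrable one_le_two), hw0, dotProduct_zero]
  have hpointwise (ω : Ω) :
      x ω ⬝ᵥ Q *ᵥ x ω + u ω ⬝ᵥ R *ᵥ u ω
          + (A *ᵥ x ω + B *ᵥ u ω + w ω) ⬝ᵥ P *ᵥ (A *ᵥ x ω + B *ᵥ u ω + w ω)
        = x ω ⬝ᵥ riccatiMap A B Q R P *ᵥ x ω
          + (u ω + riccatiGain A B R P *ᵥ x ω) ⬝ᵥ (R + Bᵀ * P * B) *ᵥ
              (u ω + riccatiGain A B R P *ᵥ x ω)
          + w ω ⬝ᵥ P *ᵥ w ω + 2 * ((A *ᵥ x ω + B *ᵥ u ω) ⬝ᵥ P *ᵥ w ω) := by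
    rw [hP.add_dotProduct_mulVec_add, ← completion_of_squares hR hP hΔ]
    ring
  have iQ := integrable_dotProduct_mulVec Q hx hx
  have iR := integrable_dotProduct_mulVec R hu hu
  have iV := integrable_dotProduct_mulVec P (hy.add hw) (hy.add hw)
  have iX := integrable_dotProduct_mulVec (riccatiMap A B Q R P) hx hx
  have hLx := hu.add (hx.mulVec (riccatiGain A B R P))
  have iS := integrable_dotProduct_mulVec (R + Bᵀ * P * B) hLx hLx
  have iW := integrable_dotProduct_mulVec P hw hw
  have iC := integrable_dotProduct_mulVec P hy hw
  rw [← integral_add, integral_congr_ae (.of_forall hpointwise), integral_add, integral_add,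
    integral_add, integral_const_mul, hcross, mul_zero, add_zero]
  all_goals fun_prop

end Expectation

lemma Finset.sum_range_add_eq_of_step {M : Type*} [AddCommMonoid M] {c s V : ℕ → M} {T : ℕ}
    (h : ∀ t < T, c t + V (t + 1) = V t + s t) :
    ∑ t ∈ range T, c t + V T = V 0 + ∑ t ∈ range T, s t := by
  induction T with
  | zero => simp
  | succ T ih =>
    rw [sum_range_succ, add_assoc, h T T.lt_add_one, ← add_assoc,
      ih fun t ht => h t (ht.trans T.lt_add_one), sum_range_succ, add_assoc]

theorem stmt15_general {n m : ℕ} (T : ℕ) {Ω : Type*} [MeasurableSpace Ω]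
    (μ : Measure Ω) [IsProbabilityMeasure μ]
    (A : Matrix (Fin n) (Fin n) ℝ) (B : Matrix (Fin n) (Fin m) ℝ)
    (Q P : ℕ → Matrix (Fin n) (Fin n) ℝ)
    (R Δ : ℕ → Matrix (Fin m) (Fin m) ℝ)
    (L : ℕ → Matrix (Fin m) (Fin n) ℝ)
    (hQ : ∀ t, (Q t).PosSemidef) (hR : ∀ t, (R t).PosDef)
    (hPT : P T = Q T)
    (hP : ∀ t < T, P t = Q t + Aᵀ * P (t + 1) * A
      - Aᵀ * P (t + 1) * B * (R t + Bᵀ * P (t + 1) * B)⁻¹ * Bᵀ * P (t + 1) * A)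
    (hL : ∀ t < T, L t = (R t + Bᵀ * P (t + 1) * B)⁻¹ * Bᵀ * P (t + 1) * A)
    (hΔ : ∀ t < T, Δ t = R t + Bᵀ * P (t + 1) * B)
    (x w : ℕ → Ω → Fin n → ℝ) (u : ℕ → Ω → Fin m → ℝ)
    (hx : ∀ t, MemLp (x t) 2 μ) (hu : ∀ t, MemLp (u t) 2 μ)
    (hw : ∀ t, MemLp (w t) 2 μ)
    (hwmean : ∀ t < T, ∫ ω, w t ω ∂μ = 0)
    (hwpast : ∀ t < T, IndepFun (w t)
      (fun ω => ((fun s : Fin (t + 1) => x s ω), (fun s : Fin (t + 1) => u s ω))) μ)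
    (hdyn : ∀ t < T, ∀ ω, x (t + 1) ω = A *ᵥ x t ω + B *ᵥ u t ω + w t ω) :
    ∫ ω, ((∑ t ∈ Finset.range T,
            (x t ω ⬝ᵥ Q t *ᵥ x t ω + u t ω ⬝ᵥ R t *ᵥ u t ω))
          + x T ω ⬝ᵥ Q T *ᵥ x T ω) ∂μ
    = (∫ ω, x 0 ω ⬝ᵥ P 0 *ᵥ x 0 ω ∂μ)
      + (∑ t ∈ Finset.range T,
          ∫ ω, (u t ω + L t *ᵥ x t ω) ⬝ᵥ Δ t *ᵥ (u t ω + L t *ᵥ x t ω) ∂μ)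
      + ∑ t ∈ Finset.range T, ∫ ω, w t ω ⬝ᵥ P (t + 1) *ᵥ w t ω ∂μ := by
  have hPsd : ∀ t ≤ T, (P t).PosSemidef := fun t ht =>
    Nat.decreasingInduction (motive := fun t _ => (P t).PosSemidef)
      (fun t ht ih => (hP t ht) ▸ posSemidef_riccatiMap (hQ t) (hR t) ih) (hPT ▸ hQ T) ht
  have hstep : ∀ t < T,
      ∫ ω, (x t ω ⬝ᵥ Q t *ᵥ x t ω + u t ω ⬝ᵥ R t *ᵥ u t ω) ∂μ
          + ∫ ω, x (t + 1) ω ⬝ᵥ P (t + 1) *ᵥ x (t + 1) ω ∂μ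
        = ∫ ω, x t ω ⬝ᵥ P t *ᵥ x t ω ∂μ
          + (∫ ω, (u t ω + L t *ᵥ x t ω) ⬝ᵥ Δ t *ᵥ (u t ω + L t *ᵥ x t ω) ∂μ
            + ∫ ω, w t ω ⬝ᵥ P (t + 1) *ᵥ w t ω ∂μ) := by
    intro t ht
    have hlast : Measurable fun p : (Fin (t + 1) → Fin n → ℝ) × (Fin (t + 1) → Fin m → ℝ) =>
        A *ᵥ p.1 (Fin.last t) + B *ᵥ p.2 (Fin.last t) := by fun_prop
    have hind : IndepFun (fun ω => A *ᵥ x t ω + B *ᵥ u t ω) (w t) μ :=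
      (hwpast t ht).symm.comp hlast measurable_id
    simp_rw [hdyn t ht, hP t ht, hL t ht, hΔ t ht, ← add_assoc]
    exact integral_cost_add_integral_value (isHermitian_iff_isSymm.mp (hR t).isHermitian)
      (isHermitian_iff_isSymm.mp (hPsd (t + 1) ht).isHermitian)
      (isUnit_det_add_transpose_mul_mul (hR t) (hPsd (t + 1) ht) B) (hx t) (hu t) (hw t) hind
      (hwmean t ht)
  have hcost (t : ℕ) :
      Integrable (fun ω => x t ω ⬝ᵥ Q t *ᵥ x t ω + u t ω ⬝ᵥ R t *ᵥ u t ω) μ :=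
    (integrable_dotProduct_mulVec _ (hx t) (hx t)).add
      (integrable_dotProduct_mulVec _ (hu t) (hu t))
  rw [integral_add (integrable_finsetSum _ fun t _ => hcost t)
      (integrable_dotProduct_mulVec _ (hx T) (hx T)),
    integral_finsetSum _ fun t _ => hcost t, ← hPT, add_assoc, ← Finset.sum_add_distrib]
  exact Finset.sum_range_add_eq_of_step (V := fun t => ∫ ω, x t ω ⬝ᵥ P t *ᵥ x t ω ∂μ) hstep

/-- Finite-horizon stochastic completion of squares. -/
theorem stmt15 {n m : ℕ} (T : ℕ) {Ω : Type*} [MeasurableSpace Ω]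
    (μ : Measure Ω) [IsProbabilityMeasure μ]
    (A : Matrix (Fin n) (Fin n) ℝ) (B : Matrix (Fin n) (Fin m) ℝ)
    (Q P : ℕ → Matrix (Fin n) (Fin n) ℝ)
    (R Δ : ℕ → Matrix (Fin m) (Fin m) ℝ)
    (L : ℕ → Matrix (Fin m) (Fin n) ℝ)
    (hQ : ∀ t, (Q t).PosSemidef) (hR : ∀ t, (R t).PosDef)
    (hPT : P T = Q T)
    (hP : ∀ t < T, P t = Q t + Aᵀ * P (t + 1) * A
      - Aᵀ * P (t + 1) * B * (R t + Bᵀ * P (t + 1) * B)⁻¹ * Bᵀ * P (t + 1) * A)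
    (hL : ∀ t < T, L t = (R t + Bᵀ * P (t + 1) * B)⁻¹ * Bᵀ * P (t + 1) * A)
    (hΔ : ∀ t < T, Δ t = R t + Bᵀ * P (t + 1) * B)
    (x w : ℕ → Ω → Fin n → ℝ) (u : ℕ → Ω → Fin m → ℝ)
    (hx : ∀ t, MemLp (x t) 2 μ) (hu : ∀ t, MemLp (u t) 2 μ)
    (hw : ∀ t, MemLp (w t) 2 μ)
    (hwmean : ∀ t < T, ∫ ω, w t ω ∂μ = 0)
    (hwindep : ∀ s < T, ∀ t < T, s ≠ t → IndepFun (w s) (w t) μ)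
    (hwpast : ∀ t < T, IndepFun (w t)
      (fun ω => ((fun s : Fin (t + 1) => x s ω), (fun s : Fin (t + 1) => u s ω))) μ)
    (hdyn : ∀ t < T, ∀ ω, x (t + 1) ω = A *ᵥ x t ω + B *ᵥ u t ω + w t ω) :
    ∫ ω, ((∑ t ∈ Finset.range T,
            (x t ω ⬝ᵥ Q t *ᵥ x t ω + u t ω ⬝ᵥ R t *ᵥ u t ω))
          + x T ω ⬝ᵥ Q T *ᵥ x T ω) ∂μ
    = (∫ ω, x 0 ω ⬝ᵥ P 0 *ᵥ x 0 ω ∂μ)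
      + (∑ t ∈ Finset.range T,
          ∫ ω, (u t ω + L t *ᵥ x t ω) ⬝ᵥ Δ t *ᵥ (u t ω + L t *ᵥ x t ω) ∂μ)
      + ∑ t ∈ Finset.range T, ∫ ω, w t ω ⬝ᵥ P (t + 1) *ᵥ w t ω ∂μ :=
  stmt15_general T μ A B Q P R Δ L hQ hR hPT hP hL hΔ x w u hx hu hw hwmean hwpast hdyn
end
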